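/- Let f : 𝔻 → S be a holomorphic map from the open unit disk 𝔻 into the vertical strip S = {w ∈ ℂ : |Re w| < M} for some M > 0. Then for all z, w ∈ 𝔻, |Re f(z) − Re f(w)| ≤ (4M/π) · d_𝔻(z, w), where d_𝔻 is the Poincaré distance on 𝔻 with curvature −1 normalization d_𝔻(0, r) = arctanh r. -/

import Mathlib

open Metric

noncomputable def artanh (r : ℝ) : ℝ := Real.log ((1 + r) / (1 - r)) / 2

/-- The Poincaré hyperbolic distance on the unit disk (curvature -1 normalization,
`d(0,r) = artanh r`). -/
noncomputable def hypDistDisk (z w : ℂ) : ℝ :=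
  artanh ‖(z - w) / (1 - (starRingEnd ℂ) z * w)‖

/-! The map `w ↦ exp (i π w / (2M))` sends the strip `|Re w| < M` into the right half-plane,
where the Schwarz–Pick lemma (Schwarz's lemma conjugated by a Möbius automorphism of the disk and a
Cayley transform) reads `‖p' ζ‖ (1 - ‖ζ‖²) ≤ 2 Re (p ζ)`. Applied to `p = exp (i π f / (2M))`, and
using `Re p ≤ ‖p‖`, this gives `‖f' ζ‖ (1 - ‖ζ‖²) ≤ 4M/π`. Integrating this bound along the radius
from `0` to `mobius z w` for `f ∘ mobius (-z)`, which takes the values `f z` and `f w` at the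
endpoints, gives the factor `artanh ‖mobius z w‖ = hypDistDisk z w`. -/

open Complex ComplexConjugate Set

noncomputable def mobius (a z : ℂ) : ℂ := (z - a) / (1 - conj a * z)

section Mobius

variable {a z : ℂ}

lemma one_sub_conj_mul_ne_zero (ha : ‖a‖ < 1) (hz : ‖z‖ < 1) : 1 - conj a * z ≠ 0 := by
  have : ‖conj a * z‖ < 1 := by
    rw [norm_mul, norm_conj]
    nlinarith [norm_nonneg a, norm_nonneg z]
  exact sub_ne_zero.2 fun h => by simp [← h] at this

lemma sq_norm_one_sub_conj_mul_sub_sq_norm_sub (a z : ℂ) :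
    ‖1 - conj a * z‖ ^ 2 - ‖z - a‖ ^ 2 = (1 - ‖a‖ ^ 2) * (1 - ‖z‖ ^ 2) := by
  simp only [← normSq_eq_norm_sq, normSq_apply, sub_re, sub_im, mul_re, mul_im, conj_re, conj_im,
    one_re, one_im]
  ring

lemma norm_mobius_lt_one (ha : ‖a‖ < 1) (hz : ‖z‖ < 1) : ‖mobius a z‖ < 1 := by
  have hden := norm_pos_iff.2 (one_sub_conj_mul_ne_zero ha hz)
  rw [mobius, norm_div, div_lt_one hden]
  refine lt_of_pow_lt_pow_left₀ 2 hden.le ?_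
  have hpos : 0 < (1 - ‖a‖ ^ 2) * (1 - ‖z‖ ^ 2) := by
    apply mul_pos <;> nlinarith [norm_nonneg a, norm_nonneg z]
  linarith [sq_norm_one_sub_conj_mul_sub_sq_norm_sub a z]

lemma mapsTo_mobius (ha : ‖a‖ < 1) : MapsTo (mobius a) (ball 0 1) (ball 0 1) := fun z hz => by
  rw [mem_ball_zero_iff] at hz ⊢
  exact norm_mobius_lt_one ha hz

lemma hasDerivAt_mobius (h : 1 - conj a * z ≠ 0) :
    HasDerivAt (mobius a) ((1 - conj a * a) / (1 - conj a * z) ^ 2) z := by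
  refine (((hasDerivAt_id' z).sub_const a).div
    (((hasDerivAt_id' z).const_mul (conj a)).const_sub 1) h).congr_deriv ?_
  congr 1
  ring

lemma differentiableOn_mobius (ha : ‖a‖ < 1) : DifferentiableOn ℂ (mobius a) (ball 0 1) :=
  fun _ hz => (hasDerivAt_mobius (one_sub_conj_mul_ne_zero ha (mem_ball_zero_iff.1 hz)))
    |>.differentiableAt.differentiableWithinAt

lemma hasDerivAt_mobius_neg_zero (a : ℂ) : HasDerivAt (mobius (-a)) ((1 - ‖a‖ ^ 2 : ℝ)) 0 := by
  convert hasDerivAt_mobius (a := -a) (z := 0) (by simp) using 1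
  simp [conj_mul']

lemma mobius_neg_zero (a : ℂ) : mobius (-a) 0 = a := by simp [mobius]

lemma mobius_neg_mobius (ha : ‖a‖ < 1) (hz : ‖z‖ < 1) : mobius (-a) (mobius a z) = z := by
  have hz' : 1 - z * conj a ≠ 0 := mul_comm z (conj a) ▸ one_sub_conj_mul_ne_zero ha hz
  have ha' := one_sub_conj_mul_ne_zero ha ha
  simp only [mobius, map_neg]
  field_simp
  rw [show 1 - z * conj a - -((z - a) * conj a) = 1 - conj a * a by ring, div_eq_iff ha']
  ring

end Mobius

section RightHalfPlane

variable {b q : ℂ}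

lemma add_conj_ne_zero (hq : 0 < q.re) (hb : 0 < b.re) : q + conj b ≠ 0 := fun h => by
  have := congrArg re h
  simp only [add_re, conj_re, zero_re] at this
  linarith

lemma norm_sub_lt_norm_add_conj (hq : 0 < q.re) (hb : 0 < b.re) : ‖q - b‖ < ‖q + conj b‖ := by
  have key : ‖q + conj b‖ ^ 2 - ‖q - b‖ ^ 2 = 4 * q.re * b.re := by
    simp only [← normSq_eq_norm_sq, normSq_apply, add_re, add_im, sub_re, sub_im, conj_re, conj_im]
    ring
  refine lt_of_pow_lt_pow_left₀ 2 (norm_nonneg _) ?_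
  nlinarith [mul_pos hq hb]

lemma hasDerivAt_sub_div_add_conj (hb : 0 < b.re) :
    HasDerivAt (fun q => (q - b) / (q + conj b)) (((2 * b.re)⁻¹ : ℝ) : ℂ) b := by
  have hb' := add_conj_ne_zero hb hb
  refine (((hasDerivAt_id' b).sub_const b).div ((hasDerivAt_id' b).add_const (conj b)) hb')
    |>.congr_deriv ?_
  rw [ofReal_inv, ← add_conj]
  field_simp
  ring

end RightHalfPlane

theorem norm_deriv_mul_le_two_mul_re {p : ℂ → ℂ} (hp : DifferentiableOn ℂ p (ball 0 1))
    (hre : ∀ z ∈ ball (0 : ℂ) 1, 0 < (p z).re) {ζ : ℂ} (hζ : ζ ∈ ball (0 : ℂ) 1) :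
    ‖deriv p ζ‖ * (1 - ‖ζ‖ ^ 2) ≤ 2 * (p ζ).re := by
  have hζ' : ‖-ζ‖ < 1 := by simpa using hζ
  set P := p ∘ mobius (-ζ)
  have hP : DifferentiableOn ℂ P (ball 0 1) :=
    hp.comp (differentiableOn_mobius hζ') (mapsTo_mobius hζ')
  have hPre : ∀ η ∈ ball (0 : ℂ) 1, 0 < (P η).re := fun η hη => hre _ (mapsTo_mobius hζ' hη)
  have hP0 : P 0 = p ζ := by simp [P, mobius_neg_zero]
  have hP' : HasDerivAt P (deriv p ζ * (1 - ‖ζ‖ ^ 2 : ℝ)) 0 := by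
    refine HasDerivAt.comp _ ?_ (hasDerivAt_mobius_neg_zero ζ)
    rw [mobius_neg_zero]
    exact (hp.differentiableAt (isOpen_ball.mem_nhds hζ)).hasDerivAt
  set b := p ζ
  have hb : 0 < b.re := hre ζ hζ
  set k : ℂ → ℂ := fun η => (P η - b) / (P η + conj b)
  have hk_diff : DifferentiableOn ℂ k (ball 0 1) :=
    (hP.sub_const b).div (hP.add_const (conj b)) fun η hη => add_conj_ne_zero (hPre η hη) hb
  have hk_maps : MapsTo k (ball 0 1) (closedBall (k 0) 1) := fun η hη => by
    have hpos := hPre η hη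
    rw [mem_closedBall, dist_eq_norm]
    simp only [k, hP0, sub_self, zero_div, sub_zero, norm_div]
    exact ((div_lt_one (norm_pos_iff.2 (add_conj_ne_zero hpos hb))).2
      (norm_sub_lt_norm_add_conj hpos hb)).le
  have hk' : HasDerivAt k (((2 * b.re)⁻¹ : ℝ) * (deriv p ζ * (1 - ‖ζ‖ ^ 2 : ℝ))) 0 := by
    refine HasDerivAt.comp (h₂ := fun q => (q - b) / (q + conj b)) _ ?_ hP'
    rw [hP0]
    exact hasDerivAt_sub_div_add_conj hb
  have hζ1 : 0 ≤ 1 - ‖ζ‖ ^ 2 := by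
    rw [mem_ball_zero_iff] at hζ
    nlinarith [norm_nonneg ζ]
  have := norm_deriv_le_one_of_mapsTo_ball hk_diff hk_maps one_pos
  rw [hk'.deriv, norm_mul, norm_mul, Complex.norm_of_nonneg (by positivity),
    Complex.norm_of_nonneg hζ1, inv_mul_le_iff₀ (by positivity)] at this
  linarith

theorem norm_deriv_mul_le_of_abs_re_lt {f : ℂ → ℂ} {M : ℝ} (hf : DifferentiableOn ℂ f (ball 0 1))
    (hM : ∀ z ∈ ball (0 : ℂ) 1, |(f z).re| < M) {ζ : ℂ} (hζ : ζ ∈ ball (0 : ℂ) 1) :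
    ‖deriv f ζ‖ * (1 - ‖ζ‖ ^ 2) ≤ 4 * M / Real.pi := by
  have hM0 : 0 < M := (abs_nonneg _).trans_lt (hM ζ hζ)
  set c := Real.pi / (2 * M) with hc_def
  have hc : 0 < c := by positivity
  set p : ℂ → ℂ := fun z => exp (c * f z * I)
  have hp : DifferentiableOn ℂ p (ball 0 1) := ((hf.const_mul _).mul_const _).cexp
  have hpre : ∀ z ∈ ball (0 : ℂ) 1, 0 < (p z).re := fun z hz => by
    have hcz : |c * (f z).re| < Real.pi / 2 := by
      rw [abs_mul, abs_of_pos hc]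
      calc c * |(f z).re| < c * M := mul_lt_mul_of_pos_left (hM z hz) hc
        _ = Real.pi / 2 := by rw [hc_def]; field_simp
    have hcos := Real.cos_pos_of_mem_Ioo (abs_lt.1 hcz)
    simpa [p, exp_re] using mul_pos (Real.exp_pos _) hcos
  have hf' := (hf.differentiableAt (isOpen_ball.mem_nhds hζ)).hasDerivAt
  have hp' : HasDerivAt p (p ζ * (c * deriv f ζ * I)) ζ :=
    ((hf'.const_mul (c : ℂ)).mul_const I).cexp
  have hbound := norm_deriv_mul_le_two_mul_re hp hpre hζ
  rw [hp'.deriv, norm_mul, norm_mul, norm_mul, norm_I, mul_one, Complex.norm_of_nonneg hc.le]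
    at hbound
  have hpn : 0 < ‖p ζ‖ := norm_pos_iff.2 (exp_ne_zero _)
  have : c * (‖deriv f ζ‖ * (1 - ‖ζ‖ ^ 2)) ≤ 2 := by
    refine le_of_mul_le_mul_left ?_ hpn
    nlinarith [re_le_norm (p ζ)]
  rw [show 4 * M / Real.pi = 2 / c by rw [hc_def]; field_simp; ring, le_div_iff₀ hc, mul_comm]
  exact this

lemma hasDerivAt_artanh {t : ℝ} (h₁ : -1 < t) (h₂ : t < 1) :
    HasDerivAt artanh (1 / (1 - t ^ 2)) t := by
  have h₁' : 0 < 1 + t := by linarith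
  have h₂' : 0 < 1 - t := by linarith
  have hquot : HasDerivAt (fun r => (1 + r) / (1 - r)) (2 / (1 - t) ^ 2) t := by
    refine (((hasDerivAt_id' t).const_add 1).div ((hasDerivAt_id' t).const_sub 1) h₂'.ne')
      |>.congr_deriv ?_
    field_simp
    ring
  refine ((hquot.log (by positivity)).div_const 2).congr_deriv ?_
  rw [show 1 - t ^ 2 = (1 + t) * (1 - t) by ring]
  field_simp

theorem norm_sub_le_mul_artanh_norm {g : ℂ → ℂ} {K : ℝ} (hg : DifferentiableOn ℂ g (ball 0 1))
    (hK : ∀ ζ ∈ ball (0 : ℂ) 1, ‖deriv g ζ‖ * (1 - ‖ζ‖ ^ 2) ≤ K) {z : ℂ}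
    (hz : z ∈ ball (0 : ℂ) 1) :
    ‖g z - g 0‖ ≤ K * artanh ‖z‖ := by
  have hz1 : ‖z‖ < 1 := mem_ball_zero_iff.1 hz
  have hnorm : ∀ t ∈ Icc (0 : ℝ) 1, ‖(t : ℂ) * z‖ = t * ‖z‖ := fun t ht => by
    rw [norm_mul, norm_real, Real.norm_of_nonneg ht.1]
  have hlt : ∀ t ∈ Icc (0 : ℝ) 1, t * ‖z‖ < 1 := fun t ht =>
    (mul_le_of_le_one_left (norm_nonneg z) ht.2).trans_lt hz1
  have hseg : ∀ t ∈ Icc (0 : ℝ) 1, (t : ℂ) * z ∈ ball (0 : ℂ) 1 := fun t ht => by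
    rw [mem_ball_zero_iff, hnorm t ht]
    exact hlt t ht
  have hg' : ∀ t ∈ Icc (0 : ℝ) 1,
      HasDerivAt (fun t : ℝ => g (t * z) - g 0) (deriv g (t * z) * z) t := fun t ht => by
    have hgt := (hg.differentiableAt (isOpen_ball.mem_nhds (hseg t ht))).hasDerivAt
    simpa using ((hgt.comp (t : ℂ) ((hasDerivAt_id' (t : ℂ)).mul_const z)).comp_ofReal).sub_const
      (g 0)
  have hB : ∀ t ∈ Icc (0 : ℝ) 1, HasDerivAt (fun t => K * artanh (t * ‖z‖))
      (K * (1 / (1 - (t * ‖z‖) ^ 2) * ‖z‖)) t := fun t ht => by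
    have := ((hasDerivAt_artanh (by nlinarith [ht.1, norm_nonneg z]) (hlt t ht)).comp t
      ((hasDerivAt_id' t).mul_const ‖z‖)).const_mul K
    simpa using this
  have hbound : ∀ t ∈ Ico (0 : ℝ) 1,
      ‖deriv g (t * z) * z‖ ≤ K * (1 / (1 - (t * ‖z‖) ^ 2) * ‖z‖) := fun t ht => by
    have ht := Ico_subset_Icc_self ht
    have hpos : 0 < 1 - (t * ‖z‖) ^ 2 := by nlinarith [hlt t ht, mul_nonneg ht.1 (norm_nonneg z)]
    have := hK _ (hseg t ht)
    rw [hnorm t ht, ← le_div_iff₀ hpos] at this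
    rw [norm_mul, ← mul_assoc, mul_one_div]
    exact mul_le_mul_of_nonneg_right this (norm_nonneg z)
  have := image_norm_le_of_norm_deriv_right_le_deriv_boundary'
    (fun t ht => (hg' t ht).continuousAt.continuousWithinAt)
    (fun t ht => (hg' t (Ico_subset_Icc_self ht)).hasDerivWithinAt)
    (by simp [artanh]) (fun t ht => (hB t ht).continuousAt.continuousWithinAt)
    (fun t ht => (hB t (Ico_subset_Icc_self ht)).hasDerivWithinAt) hbound
    (right_mem_Icc.2 zero_le_one)
  simpa using this

theorem re_of_holomorphic_into_strip_lipschitz_general (M : ℝ) (f : ℂ → ℂ)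
    (hf : DifferentiableOn ℂ f (ball 0 1))
    (hmaps : ∀ z ∈ ball (0 : ℂ) 1, |(f z).re| < M) :
    ∀ z ∈ ball (0 : ℂ) 1, ∀ w ∈ ball (0 : ℂ) 1,
      |(f z).re - (f w).re| ≤ (4 * M / Real.pi) * hypDistDisk z w := by
  intro z hz w hw
  have hz' : ‖-z‖ < 1 := by simpa using hz
  set g := f ∘ mobius (-z)
  have hg : DifferentiableOn ℂ g (ball 0 1) :=
    hf.comp (differentiableOn_mobius hz') (mapsTo_mobius hz')
  have hgM : ∀ ζ ∈ ball (0 : ℂ) 1, |(g ζ).re| < M := fun ζ hζ =>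
    hmaps _ (mapsTo_mobius hz' hζ)
  have hmem : mobius z w ∈ ball (0 : ℂ) 1 := mapsTo_mobius (mem_ball_zero_iff.1 hz) hw
  have hdist : hypDistDisk z w = artanh ‖mobius z w‖ := by
    rw [hypDistDisk, mobius, norm_div, norm_div, norm_sub_rev]
  calc |(f z).re - (f w).re| = |(g (mobius z w) - g 0).re| := by
        rw [abs_sub_comm, sub_re]
        simp only [g, Function.comp_apply, mobius_neg_zero,
          mobius_neg_mobius (mem_ball_zero_iff.1 hz) (mem_ball_zero_iff.1 hw)]
    _ ≤ ‖g (mobius z w) - g 0‖ := abs_re_le_norm _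
    _ ≤ 4 * M / Real.pi * hypDistDisk z w := by
      rw [hdist]
      exact norm_sub_le_mul_artanh_norm hg (fun ζ hζ => norm_deriv_mul_le_of_abs_re_lt hg hgM hζ)
        hmem

/-- A holomorphic map of the disk into the vertical strip `{|Re w| < M}` has real part
`(4M/π)`-Lipschitz with respect to the Poincaré distance on `𝔻`. -/
theorem re_of_holomorphic_into_strip_lipschitz (M : ℝ) (hM : 0 < M) (f : ℂ → ℂ)
    (hf : DifferentiableOn ℂ f (ball 0 1))
    (hmaps : ∀ z ∈ ball (0 : ℂ) 1, |(f z).re| < M) :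
    ∀ z ∈ ball (0 : ℂ) 1, ∀ w ∈ ball (0 : ℂ) 1,
      |(f z).re - (f w).re| ≤ (4 * M / Real.pi) * hypDistDisk z w :=
  re_of_holomorphic_into_strip_lipschitz_general M f hf hmaps
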